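/- Let K be a subquotient of the finite group G, i.e., K ≅ H/N for some subgroup H of G and normal subgroup N of H. Then σ(G)/|G| ≤ σ(K)/|K|; equivalently, |K| · σ(G) ≤ |G| · σ(K). -/

import Mathlib

open scoped ENNReal


open MvPolynomial

/-- The (right) action of a group element `g` on the coordinate ring `F[V]` of `V = ι → F`,
determined by `(f^g)(v) = f (g • v)` where `g` acts on `V` through the representation `ρ`. -/
noncomputable def polyAct {F : Type*} [Field F] {G : Type*} [Group G] {ι : Type*}
    [Fintype ι] [DecidableEq ι] (ρ : Representation F G (ι → F)) (g : G) :
    MvPolynomial ι F →ₐ[F] MvPolynomial ι F :=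
  MvPolynomial.aeval (fun i => ∑ j, (ρ g (Pi.single j 1) i) • MvPolynomial.X j)

/-- The ring of polynomial invariants `F[V]^G`. -/
noncomputable def invRing {F : Type*} [Field F] {G : Type*} [Group G] {ι : Type*}
    [Fintype ι] [DecidableEq ι] (ρ : Representation F G (ι → F)) :
    Subalgebra F (MvPolynomial ι F) :=
  ⨅ g : G, AlgHom.equalizer (polyAct ρ g) (AlgHom.id F (MvPolynomial ι F))

/-- The degree `d` homogeneous component of a graded subalgebra `S` of the polynomial ring,
as a subspace of the polynomial ring. -/
noncomputable def subComp {F : Type*} [Field F] {ι : Type*} (S : Subalgebra F (MvPolynomial ι F)) (d : ℕ) :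
    Submodule F (MvPolynomial ι F) :=
  Subalgebra.toSubmodule S ⊓ homogeneousSubmodule ι F d

/-- `S_+`, the span of the homogeneous elements of positive degree of `S`. -/
noncomputable def subPos {F : Type*} [Field F] {ι : Type*} (S : Subalgebra F (MvPolynomial ι F)) :
    Submodule F (MvPolynomial ι F) :=
  ⨆ d ∈ Set.Ioi (0 : ℕ), subComp S d

/-- `β_k(S)`, the top degree of `S_+ / S_+^{k+1}`, i.e. the supremum (in `ℕ∞`) of the degrees `d`
such that the degree `d` component of `S_+` is not contained in `S_+^{k+1}`. -/
noncomputable def betaAlg {F : Type*} [Field F] {ι : Type*}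
    (S : Subalgebra F (MvPolynomial ι F)) (k : ℕ) : ℕ∞ :=
  sSup ((fun d : ℕ => (d : ℕ∞)) '' {d | 0 < d ∧ ¬ subComp S d ≤ subPos S ^ (k + 1)})

/-- `β_k(F[V], S)`, the top degree of `F[V]/S_+^k F[V]`, i.e. the supremum (in `ℕ∞`) of the
degrees `d` such that the degree `d` component of the polynomial ring is not contained in
`S_+^k ⬝ F[V]`. -/
noncomputable def betaMod {F : Type*} [Field F] {ι : Type*}
    (S : Subalgebra F (MvPolynomial ι F)) (k : ℕ) : ℕ∞ :=
  sSup ((fun d : ℕ => (d : ℕ∞)) ''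
    {d | ¬ homogeneousSubmodule ι F d ≤ subPos S ^ k * (⊤ : Submodule F (MvPolynomial ι F))})

/-- `β_k(G)`, the supremum over all finite dimensional `G`-modules `V` of `β_k(F[V]^G)`. -/
noncomputable def betaGrp (F : Type*) [Field F] (G : Type*) [Group G] (k : ℕ) : ℕ∞ :=
  ⨆ (n : ℕ) (ρ : Representation F G (Fin n → F)), betaAlg (invRing ρ) k

/-- `S` is a finitely generated module over its subalgebra `T`. -/
noncomputable def fgOver {F : Type*} [Field F] {ι : Type*} (S T : Subalgebra F (MvPolynomial ι F)) : Prop :=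
  ∃ B : Finset (MvPolynomial ι F), (B : Set (MvPolynomial ι F)) ⊆ S ∧
    Subalgebra.toSubmodule S ≤ Subalgebra.toSubmodule T * Submodule.span F (B : Set (MvPolynomial ι F))

/-- `σ(S)`: the minimal `d` such that `S` is a finitely generated module over the subalgebra
`F[S_{≤ d}]` generated by the homogeneous elements of `S` of degree at most `d`. -/
noncomputable def sigmaAlg {F : Type*} [Field F] {ι : Type*}
    (S : Subalgebra F (MvPolynomial ι F)) : ℕ :=
  sInf {d : ℕ | fgOver S (Algebra.adjoin F (⋃ i ∈ Set.Iic d, (subComp S i : Set (MvPolynomial ι F))))}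

/-- `σ(G)`, the supremum over all finite dimensional `G`-modules `V` of `σ(F[V]^G)`. -/
noncomputable def sigmaGrp (F : Type*) [Field F] (G : Type*) [Group G] : ℕ∞ :=
  ⨆ (n : ℕ) (ρ : Representation F G (Fin n → F)), (sigmaAlg (invRing ρ) : ℕ∞)

/-- An irreducible (simple, nonzero) representation. -/
def IsIrredRep {F : Type*} [Field F] {G : Type*} [Group G] {V : Type*}
    [AddCommGroup V] [Module F V] (π : Representation F G V) : Prop :=
  Nontrivial V ∧ ∀ W : Submodule F V, (∀ g : G, ∀ x ∈ W, π g x ∈ W) → W = ⊥ ∨ W = ⊤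

/-! Let `V` be a `G`-module and `K ≅ H / N` with `N ⊴ H ≤ G`. The `N`-invariants of degree at
most `|N|` span a finite-dimensional `H`-stable subspace `U ⊆ F[V]` on which `N` acts trivially,
so `W = U*` is a `K`-module and evaluation at a basis of `U` is a `K`-equivariant map
`F[W] → F[V]` with image `F[U]`. By Noether's bound `F[V]` is module-finite over `F[U]`, hence
over the image of `F[W]^K_{≤ σ(K)}`, which is generated by `H`-invariants of degree at most
`|N| σ(K)`. A homogeneous `H`-invariant of degree `d` is a root of its `G`-orbit polynomial,
whose coefficients are `G`-invariants of degree at most `[G : H] d`. So `F[V]`, hence also its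
submodule `F[V]^G` (the base being Noetherian), is module-finite over
`F[V]^G_{≤ [G : H] |N| σ(K)}`, and `[G : H] |N| = |G| / |K|`. -/

section PolyAct

variable {F : Type*} [Field F] {Γ : Type*} [Group Γ] {ι : Type*} [Fintype ι] [DecidableEq ι]
  (τ : Representation F Γ (ι → F))

lemma polyAct_X (g : Γ) (i : ι) :
    polyAct τ g (X i) = ∑ j, τ g (Pi.single j 1) i • X j :=
  aeval_X _ i

lemma polyAct_one : polyAct τ 1 = AlgHom.id F (MvPolynomial ι F) := by
  refine algHom_ext fun i => ?_
  simp [polyAct_X, Pi.single_apply]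

lemma polyAct_mul (g h : Γ) : polyAct τ (g * h) = (polyAct τ h).comp (polyAct τ g) := by
  refine algHom_ext fun i => ?_
  have hexpand (k : ι) :
      τ g (τ h (Pi.single k 1)) i = ∑ j, τ h (Pi.single k 1) j * τ g (Pi.single j 1) i := by
    conv_lhs => rw [← Finset.univ_sum_single (τ h (Pi.single k 1))]
    simp only [map_sum, Finset.sum_apply]
    refine Finset.sum_congr rfl fun j _ => ?_
    rw [← smul_eq_mul, ← Pi.smul_apply, ← map_smul, ← Pi.single_smul, smul_eq_mul, mul_one]
  simp only [AlgHom.comp_apply, polyAct_X, map_sum, map_smul, Finset.smul_sum, smul_smul,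
    map_mul, Module.End.mul_apply, hexpand, Finset.sum_smul]
  rw [Finset.sum_comm]
  exact Finset.sum_congr rfl fun _ _ => Finset.sum_congr rfl fun _ _ => by rw [mul_comm]

lemma mem_invRing_iff {p : MvPolynomial ι F} : p ∈ invRing τ ↔ ∀ g, polyAct τ g p = p := by
  simp [invRing, Algebra.mem_iInf, AlgHom.mem_equalizer]

end PolyAct

section Grading

variable {F : Type*} [Field F] {ι κ : Type*}

lemma totalDegree_aeval_le {w : κ → MvPolynomial ι F} {c : ℕ} (hw : ∀ j, (w j).totalDegree ≤ c)
    (q : MvPolynomial κ F) : (aeval w q).totalDegree ≤ c * q.totalDegree := by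
  rw [aeval_def, eval₂_eq]
  refine (totalDegree_finsetSum _ _).trans (Finset.sup_le fun u hu => ?_)
  refine (totalDegree_mul _ _).trans ?_
  rw [algebraMap_eq, totalDegree_C, zero_add]
  refine (totalDegree_finsetProd _ _).trans ?_
  calc ∑ i ∈ u.support, (w i ^ u i).totalDegree ≤ ∑ i ∈ u.support, c * u i :=
        Finset.sum_le_sum fun i _ =>
          (totalDegree_pow _ _).trans (by rw [mul_comm]; exact Nat.mul_le_mul_right _ (hw i))
    _ = c * u.sum fun _ e => e := by rw [Finsupp.sum, Finset.mul_sum]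
    _ ≤ c * q.totalDegree := Nat.mul_le_mul_left c (le_totalDegree hu)

lemma totalDegree_coeff_prod_X_sub_C_le {α : Type*} (s : Finset α) (a : α → MvPolynomial ι F)
    {d : ℕ} (ha : ∀ i ∈ s, (a i).totalDegree ≤ d) (k : ℕ) :
    ((∏ i ∈ s, (Polynomial.X - Polynomial.C (a i))).coeff k).totalDegree ≤ s.card * d := by
  classical
  induction s using Finset.induction_on generalizing k with
  | empty => rcases k with _ | k <;> simp [Polynomial.coeff_one]
  | insert i s hi ih =>
    have ih' := ih fun j hj => ha j (Finset.mem_insert_of_mem hj)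
    rw [Finset.prod_insert hi, sub_mul, Polynomial.coeff_sub, Polynomial.coeff_C_mul,
      Finset.card_insert_of_notMem hi, add_mul, one_mul]
    refine (totalDegree_sub _ _).trans (max_le ?_ ?_)
    · rcases k with _ | k
      · simp
      · rw [Polynomial.coeff_X_mul]; exact (ih' k).trans (Nat.le_add_right _ _)
    · refine (totalDegree_mul _ _).trans ?_
      rw [add_comm]
      exact add_le_add (ih' k) (ha i (Finset.mem_insert_self i s))

end Grading

section Homogeneous

variable {F : Type*} [Field F] {Γ : Type*} [Group Γ] {ι : Type*} [Fintype ι] [DecidableEq ι]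
  (τ : Representation F Γ (ι → F))

lemma polyAct_X_isHomogeneous (g : Γ) (i : ι) : (polyAct τ g (X i)).IsHomogeneous 1 := by
  rw [polyAct_X, ← mem_homogeneousSubmodule]
  exact Submodule.sum_mem _ fun j _ =>
    Submodule.smul_mem _ _ ((mem_homogeneousSubmodule _ _).2 (isHomogeneous_X F j))

lemma isHomogeneous_polyAct {p : MvPolynomial ι F} {d : ℕ} (hp : p.IsHomogeneous d) (g : Γ) :
    (polyAct τ g p).IsHomogeneous d := by
  rw [aeval_unique (polyAct τ g)]
  have h := hp.aeval _ (polyAct_X_isHomogeneous τ g)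
  rw [one_mul] at h
  exact h

lemma totalDegree_polyAct_le (g : Γ) (p : MvPolynomial ι F) :
    (polyAct τ g p).totalDegree ≤ p.totalDegree := by
  rw [aeval_unique (polyAct τ g)]
  have h := totalDegree_aeval_le (fun i => (polyAct_X_isHomogeneous τ g i).totalDegree_le) p
  rw [one_mul] at h
  exact h

lemma polyAct_homogeneousComponent (g : Γ) (d : ℕ) (p : MvPolynomial ι F) :
    polyAct τ g (homogeneousComponent d p) = homogeneousComponent d (polyAct τ g p) := by
  have h j : homogeneousComponent d (polyAct τ g (homogeneousComponent j p)) =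
      if d = j then polyAct τ g (homogeneousComponent j p) else 0 :=
    homogeneousComponent_of_mem (isHomogeneous_polyAct τ (homogeneousComponent_isHomogeneous j p) g)
  conv_rhs => rw [← sum_homogeneousComponent p, map_sum, map_sum]
  rw [Finset.sum_congr rfl fun j _ => h j, Finset.sum_ite_eq]
  split_ifs with hd
  · rfl
  · rw [homogeneousComponent_eq_zero _ _ (by simpa using hd), map_zero]

lemma homogeneousComponent_mem_invRing {p : MvPolynomial ι F} (hp : p ∈ invRing τ) (d : ℕ) :
    homogeneousComponent d p ∈ invRing τ := by
  rw [mem_invRing_iff] at hp ⊢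
  intro g
  rw [polyAct_homogeneousComponent, hp g]

end Homogeneous

/-- `T ⊆ S ⬝ span M` for a finite set `M`, which, unlike in `fgOver`, need not lie in `T`. -/
def ModuleFiniteOver {R A : Type*} [CommSemiring R] [Semiring A] [Algebra R A]
    (S T : Subalgebra R A) : Prop :=
  ∃ M : Set A, M.Finite ∧
    Subalgebra.toSubmodule T ≤ Subalgebra.toSubmodule S * Submodule.span R M

namespace ModuleFiniteOver

open scoped Pointwise

variable {R A B : Type*} [CommSemiring R] [CommSemiring A] [Algebra R A] [CommSemiring B]
  [Algebra R B] {S S' T T' U : Subalgebra R A}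

lemma mono_left (hS : S ≤ S') (h : ModuleFiniteOver S T) : ModuleFiniteOver S' T :=
  let ⟨M, hM, hT⟩ := h
  ⟨M, hM, hT.trans (mul_le_mul' hS le_rfl)⟩

lemma mono_right (hT : T' ≤ T) (h : ModuleFiniteOver S T) : ModuleFiniteOver S T' :=
  let ⟨M, hM, hle⟩ := h
  ⟨M, hM, le_trans hT hle⟩

lemma trans (hST : ModuleFiniteOver S T) (hTU : ModuleFiniteOver T U) : ModuleFiniteOver S U := by
  obtain ⟨M, hM, hT⟩ := hST
  obtain ⟨M', hM', hU⟩ := hTU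
  refine ⟨M * M', hM.mul hM', hU.trans ?_⟩
  calc Subalgebra.toSubmodule T * Submodule.span R M'
      ≤ Subalgebra.toSubmodule S * Submodule.span R M * Submodule.span R M' :=
        mul_le_mul' hT le_rfl
    _ = Subalgebra.toSubmodule S * Submodule.span R (M * M') := by
        rw [mul_assoc, Submodule.span_mul_span]

lemma map (φ : A →ₐ[R] B) (h : ModuleFiniteOver S T) : ModuleFiniteOver (S.map φ) (T.map φ) := by
  obtain ⟨M, hM, hT⟩ := h
  refine ⟨φ '' M, hM.image φ, ?_⟩
  have h := Submodule.map_mono (f := φ.toLinearMap) hT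
  rwa [Submodule.map_mul, Submodule.map_span, ← Subalgebra.map_toSubmodule,
    ← Subalgebra.map_toSubmodule] at h

end ModuleFiniteOver

section ModuleFinite

variable {R A : Type*} [CommRing R] [CommRing A] [Algebra R A]

lemma Subalgebra.toSubmodule_mul_span (S : Subalgebra R A) (M : Set A) :
    Subalgebra.toSubmodule S * Submodule.span R M = (Submodule.span S M).restrictScalars R := by
  refine le_antisymm (Submodule.mul_le.2 fun s hs m hm => ?_) fun x hx => ?_
  · exact Submodule.smul_mem _ (⟨s, hs⟩ : S) (Submodule.span_le_restrictScalars R S M hm)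
  · induction hx using Submodule.span_induction with
    | mem y hy =>
      simpa using Submodule.mul_mem_mul ((Subalgebra.mem_toSubmodule S).2 S.one_mem)
        (Submodule.subset_span (R := R) hy)
    | zero => exact zero_mem _
    | add y z _ _ hy hz => exact add_mem hy hz
    | smul t y _ hy =>
      have h := Submodule.mul_mem_mul (Subalgebra.mem_toSubmodule S |>.2 t.2) hy
      rwa [← mul_assoc, Subalgebra.mul_toSubmodule, sup_idem] at h

lemma ModuleFiniteOver.of_isIntegral (S : Subalgebra R A) {s : Set A} (hs : s.Finite)
    (h : ∀ x ∈ s, IsIntegral S x) : ModuleFiniteOver S (Algebra.adjoin R s) := by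
  obtain ⟨M, hM⟩ := fg_adjoin_of_finite hs h
  refine ⟨M, M.finite_toSet, fun x hx => ?_⟩
  have hle : Algebra.adjoin R s ≤ (Algebra.adjoin S s).restrictScalars R :=
    Algebra.adjoin_le Algebra.subset_adjoin
  rw [Subalgebra.toSubmodule_mul_span, Submodule.restrictScalars_mem, hM]
  exact hle hx

end ModuleFinite

lemma fgOver_of_moduleFiniteOver {F : Type*} [Field F] {ι : Type*}
    {S T : Subalgebra F (MvPolynomial ι F)} [IsNoetherianRing T] (h : ModuleFiniteOver T S) :
    fgOver S T := by
  obtain ⟨M, hM, hS⟩ := h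
  have hfg : (Submodule.span T (S : Set (MvPolynomial ι F))).FG := by
    refine (Submodule.fg_span hM).of_le (Submodule.span_le.2 fun x hx => ?_)
    have := hS hx
    rwa [Subalgebra.toSubmodule_mul_span] at this
  obtain ⟨B, hBS, hB⟩ := (Submodule.fg_span_iff_fg_span_finset_subset _).1 hfg
  refine ⟨B, hBS, fun x hx => ?_⟩
  rw [Subalgebra.toSubmodule_mul_span, Submodule.restrictScalars_mem, ← hB]
  exact Submodule.subset_span hx

section AdjoinDegLE

variable {F : Type*} [Field F] {ι : Type*}

noncomputable def adjoinDegLE (S : Subalgebra F (MvPolynomial ι F)) (d : ℕ) :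
    Subalgebra F (MvPolynomial ι F) :=
  Algebra.adjoin F (⋃ i ∈ Set.Iic d, (subComp S i : Set (MvPolynomial ι F)))

variable {S : Subalgebra F (MvPolynomial ι F)}

lemma mem_subComp {d : ℕ} {p : MvPolynomial ι F} : p ∈ subComp S d ↔ p ∈ S ∧ p.IsHomogeneous d := by
  simp [subComp, mem_homogeneousSubmodule]

lemma subComp_subset_adjoinDegLE {i d : ℕ} (h : i ≤ d) :
    (subComp S i : Set (MvPolynomial ι F)) ⊆ adjoinDegLE S d := fun _ hp =>
  Algebra.subset_adjoin (Set.mem_biUnion (Set.mem_Iic.2 h) hp)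

lemma adjoinDegLE_le (d : ℕ) : adjoinDegLE S d ≤ S :=
  Algebra.adjoin_le <| Set.iUnion₂_subset fun _ _ _ hp => (mem_subComp.1 hp).1

lemma adjoinDegLE_mono : Monotone (adjoinDegLE S) := fun _ _ hde =>
  Algebra.adjoin_le <| Set.iUnion₂_subset fun _ hi =>
    subComp_subset_adjoinDegLE ((Set.mem_Iic.1 hi).trans hde)

lemma sigmaAlg_le {d : ℕ} (h : fgOver S (adjoinDegLE S d)) : sigmaAlg S ≤ d :=
  Nat.sInf_le h

lemma fgOver_adjoinDegLE_sigmaAlg {d : ℕ} (h : fgOver S (adjoinDegLE S d)) :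
    fgOver S (adjoinDegLE S (sigmaAlg S)) :=
  Nat.sInf_mem (s := {d | fgOver S (adjoinDegLE S d)}) ⟨d, h⟩

variable [Finite ι]

lemma exists_finset_adjoinDegLE_eq (S : Subalgebra F (MvPolynomial ι F)) (d : ℕ) :
    ∃ E : Finset (MvPolynomial ι F), (∀ p ∈ E, ∃ i ≤ d, p ∈ subComp S i) ∧
      adjoinDegLE S d = Algebra.adjoin F E := by
  classical
  have hfg i : (subComp S i).FG :=
    (Module.Finite.iff_fg.1 inferInstance : (restrictTotalDegree ι F i).FG).of_le fun p hp =>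
      (mem_restrictTotalDegree ι i p).2 (mem_subComp.1 hp).2.totalDegree_le
  choose E hE using hfg
  set E' := (Finset.Iic d).biUnion E
  refine ⟨E', fun p hp => ?_, le_antisymm ?_ ?_⟩
  · obtain ⟨i, hi, hpi⟩ := Finset.mem_biUnion.1 hp
    exact ⟨i, Finset.mem_Iic.1 hi, hE i ▸ Submodule.subset_span hpi⟩
  · refine Algebra.adjoin_le <| Set.iUnion₂_subset fun i hi => ?_
    have hEi : (E i : Set (MvPolynomial ι F)) ⊆ Algebra.adjoin F (E' : Set (MvPolynomial ι F)) :=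
      fun p hp => Algebra.subset_adjoin (Finset.mem_biUnion.2 ⟨i, Finset.mem_Iic.2 hi, hp⟩)
    rw [← hE i]
    exact (Submodule.span_le (p := Subalgebra.toSubmodule (Algebra.adjoin F _))).2 hEi
  · refine Algebra.adjoin_le fun p hp => ?_
    obtain ⟨i, hi, hpi⟩ := Finset.mem_biUnion.1 hp
    exact subComp_subset_adjoinDegLE (Finset.mem_Iic.1 hi) (hE i ▸ Submodule.subset_span hpi)

instance (S : Subalgebra F (MvPolynomial ι F)) (d : ℕ) : IsNoetherianRing (adjoinDegLE S d) := by
  obtain ⟨E, -, hE⟩ := exists_finset_adjoinDegLE_eq S d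
  rw [hE]
  have := (Subalgebra.fg_iff_finiteType _).1 (Subalgebra.fg_adjoin_finset (R := F) E)
  exact Algebra.FiniteType.isNoetherianRing F _

end AdjoinDegLE

section Integrality

variable {F : Type*} [Field F] {Γ : Type*} [Group Γ] {ι : Type*} [Fintype ι] [DecidableEq ι]
  (τ : Representation F Γ (ι → F))

/-- Turns the right action `polyAct` into a left one, so that Mathlib's orbit polynomials
`prodXSubSMul` apply. -/
noncomputable abbrev polyAction : MulSemiringAction Γ (MvPolynomial ι F) where
  smul g p := polyAct τ g⁻¹ p
  one_smul p := by
    change polyAct τ 1⁻¹ p = p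
    rw [inv_one, polyAct_one, AlgHom.id_apply]
  mul_smul g h p := by
    change polyAct τ (g * h)⁻¹ p = polyAct τ g⁻¹ (polyAct τ h⁻¹ p)
    rw [mul_inv_rev, polyAct_mul, AlgHom.comp_apply]
  smul_zero g := map_zero (polyAct τ g⁻¹)
  smul_add g := map_add (polyAct τ g⁻¹)
  smul_one g := map_one (polyAct τ g⁻¹)
  smul_mul g := map_mul (polyAct τ g⁻¹)

lemma mem_adjoinDegLE_invRing {p : MvPolynomial ι F} {d : ℕ} (hp : p ∈ invRing τ)
    (hd : p.totalDegree ≤ d) : p ∈ adjoinDegLE (invRing τ) d := by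
  rw [← sum_homogeneousComponent p]
  refine Subalgebra.sum_mem _ fun i hi => subComp_subset_adjoinDegLE
    ((Nat.lt_succ_iff.1 (Finset.mem_range.1 hi)).trans hd) ?_
  exact mem_subComp.2
    ⟨homogeneousComponent_mem_invRing τ hp i, homogeneousComponent_isHomogeneous i p⟩

lemma map_aeval_adjoinDegLE_le {κ : Type*} {S : Subalgebra F (MvPolynomial κ F)}
    {w : κ → MvPolynomial ι F} {c : ℕ} (hw : ∀ j, (w j).totalDegree ≤ c)
    (hS : ∀ q ∈ S, aeval w q ∈ invRing τ) (s : ℕ) :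
    (adjoinDegLE S s).map (aeval w) ≤ adjoinDegLE (invRing τ) (c * s) := by
  rw [adjoinDegLE, AlgHom.map_adjoin]
  refine Algebra.adjoin_le ?_
  rintro _ ⟨q, hq, rfl⟩
  obtain ⟨i, hi, hqi⟩ := Set.mem_iUnion₂.1 hq
  obtain ⟨hqS, hqhom⟩ := mem_subComp.1 hqi
  exact mem_adjoinDegLE_invRing τ (hS q hqS) ((totalDegree_aeval_le hw q).trans
    (Nat.mul_le_mul_left c (hqhom.totalDegree_le.trans hi)))

/-- A `Λ`-invariant form of degree `d` is a root of its `Γ`-orbit polynomial, whose coefficients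
are `Γ`-invariants of degree at most `[Γ : Λ] ⬝ d`. -/
lemma isIntegral_of_isHomogeneous [Finite Γ] (Λ : Subgroup Γ) {f : MvPolynomial ι F} {d : ℕ}
    (hf : f.IsHomogeneous d) (hinv : ∀ γ ∈ Λ, polyAct τ γ f = f)
    {T : Subalgebra F (MvPolynomial ι F)} (hT : adjoinDegLE (invRing τ) (Λ.index * d) ≤ T) :
    IsIntegral T f := by
  let := polyAction τ
  have := Fintype.ofFinite Γ
  set P := prodXSubSMul Γ (MvPolynomial ι F) f
  have hstab : Λ ≤ MulAction.stabilizer Γ f := fun γ hγ => hinv γ⁻¹ (inv_mem hγ)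
  have hdeg k : (P.coeff k).totalDegree ≤ Λ.index * d := by
    refine (totalDegree_coeff_prod_X_sub_C_le (d := d) _ _ (fun q _ => ?_) k).trans ?_
    · induction q using QuotientGroup.induction_on with
      | H g =>
        rw [MulAction.ofQuotientStabilizer_mk]
        exact (isHomogeneous_polyAct τ hf g⁻¹).totalDegree_le
    · simp only [Finset.card_univ, ← Nat.card_eq_fintype_card]
      exact Nat.mul_le_mul_right d (Subgroup.index_antitone hstab)
  have hinvP k : P.coeff k ∈ invRing τ :=
    (mem_invRing_iff τ).2 fun g => by
      have h := prodXSubSMul.coeff Γ (MvPolynomial ι F) f g⁻¹ k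
      change polyAct τ g⁻¹⁻¹ _ = _ at h
      rwa [inv_inv] at h
  refine IsIntegral.of_aeval_monic_of_isIntegral_coeff (prodXSubSMul.monic Γ _ f) ?_
    (by rw [prodXSubSMul.eval]; exact isIntegral_zero) fun k => ?_
  · intro h0
    have := prodXSubSMul.eval Γ (MvPolynomial ι F) f
    rw [(prodXSubSMul.monic Γ _ f).natDegree_eq_zero.1 h0, Polynomial.eval_one] at this
    exact one_ne_zero this
  · exact isIntegral_algebraMap (x := (⟨_, hT (mem_adjoinDegLE_invRing τ (hinvP k) (hdeg k))⟩ : T))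

end Integrality

section Noether

variable {F : Type*} [Field F] {Γ : Type*} [Group Γ] [Finite Γ] {ι : Type*} [Fintype ι]
  [DecidableEq ι] (τ : Representation F Γ (ι → F))

lemma moduleFiniteOver_adjoinDegLE_subgroup (Λ : Subgroup Γ) (D : ℕ) :
    ModuleFiniteOver (adjoinDegLE (invRing τ) (Λ.index * D))
      (adjoinDegLE (invRing (τ.comp Λ.subtype)) D) := by
  obtain ⟨E, hE, hadj⟩ := exists_finset_adjoinDegLE_eq (invRing (τ.comp Λ.subtype)) D
  rw [hadj]
  refine ModuleFiniteOver.of_isIntegral _ E.finite_toSet fun p hp => ?_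
  obtain ⟨i, hi, hpi⟩ := hE p hp
  obtain ⟨hinv, hhom⟩ := mem_subComp.1 hpi
  exact isIntegral_of_isHomogeneous τ Λ hhom (fun γ hγ => (mem_invRing_iff _).1 hinv ⟨γ, hγ⟩)
    (adjoinDegLE_mono (Nat.mul_le_mul_left _ hi))

lemma moduleFiniteOver_adjoinDegLE_card_top :
    ModuleFiniteOver (adjoinDegLE (invRing τ) (Nat.card Γ)) ⊤ := by
  rw [← adjoin_range_X]
  refine ModuleFiniteOver.of_isIntegral _ (Set.finite_range _) ?_
  rintro _ ⟨i, rfl⟩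
  refine isIntegral_of_isHomogeneous τ ⊥ (isHomogeneous_X F i) ?_
    (by rw [Subgroup.index_bot, mul_one])
  rintro γ rfl
  rw [polyAct_one, AlgHom.id_apply]

lemma moduleFiniteOver_adjoinDegLE_sigmaAlg_top :
    ModuleFiniteOver (adjoinDegLE (invRing τ) (sigmaAlg (invRing τ))) ⊤ := by
  have hcard := moduleFiniteOver_adjoinDegLE_card_top τ
  obtain ⟨B, -, hB⟩ :=
    fgOver_adjoinDegLE_sigmaAlg (fgOver_of_moduleFiniteOver (hcard.mono_right le_top))
  exact ModuleFiniteOver.trans ⟨B, B.finite_toSet, hB⟩ (hcard.mono_left (adjoinDegLE_le _))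

end Noether

section Representations

variable {F : Type*} [Field F] {Γ : Type*} [Group Γ] {ι : Type*} [Fintype ι] [DecidableEq ι]
  (τ : Representation F Γ (ι → F))

lemma polyAct_mem_invRing_of_normal (N : Subgroup Γ) [N.Normal] {p : MvPolynomial ι F}
    (hp : p ∈ invRing (τ.comp N.subtype)) (g : Γ) : polyAct τ g p ∈ invRing (τ.comp N.subtype) := by
  rw [mem_invRing_iff] at hp ⊢
  intro ν
  have hconj := hp ⟨g * ν * g⁻¹, ‹N.Normal›.conj_mem ν ν.2 g⟩
  change polyAct τ ν (polyAct τ g p) = polyAct τ g p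
  change polyAct τ (g * ν * g⁻¹) p = p at hconj
  rw [← AlgHom.comp_apply, ← polyAct_mul, show g * ν = g * ν * g⁻¹ * g by group, polyAct_mul,
    AlgHom.comp_apply, hconj]

noncomputable def restrictRep (U : Submodule F (MvPolynomial ι F))
    (hU : ∀ g, ∀ u ∈ U, polyAct τ g u ∈ U) : Representation F Γ U where
  toFun g := (polyAct τ g⁻¹).toLinearMap.restrict (hU g⁻¹)
  map_one' := LinearMap.ext fun u => Subtype.ext <| by
    change polyAct τ 1⁻¹ u = u
    rw [inv_one, polyAct_one, AlgHom.id_apply]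
  map_mul' g h := LinearMap.ext fun u => Subtype.ext <| by
    change polyAct τ (g * h)⁻¹ u = polyAct τ g⁻¹ (polyAct τ h⁻¹ u)
    rw [mul_inv_rev, polyAct_mul, AlgHom.comp_apply]

lemma restrictRep_apply (U : Submodule F (MvPolynomial ι F)) (hU : ∀ g, ∀ u ∈ U, polyAct τ g u ∈ U)
    (g : Γ) (u : U) : (restrictRep τ U hU g u : MvPolynomial ι F) = polyAct τ g⁻¹ u :=
  rfl

end Representations

section DualCoordinates

variable {F : Type*} [Field F] {K : Type*} [Group K] {V : Type*} [AddCommGroup V] [Module F V]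
  {κ : Type*} [Fintype κ] [DecidableEq κ]

noncomputable def dualCoordRep (σ : Representation F K V) (b : Module.Basis κ F V) :
    Representation F K (κ → F) :=
  (b.dualBasis.equivFun.conjAlgEquiv F).toAlgHom.toMonoidHom.comp σ.dual

lemma dualCoordRep_single_apply (σ : Representation F K V) (b : Module.Basis κ F V) (k : K)
    (x j : κ) : dualCoordRep σ b k (Pi.single x 1) j = b.repr (σ k⁻¹ (b j)) x := by
  rw [dualCoordRep, MonoidHom.comp_apply]
  simp [LinearEquiv.conjAlgEquiv_apply, Representation.dual_apply, Module.Basis.dualBasis_equivFun,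
    Module.Dual.transpose_apply]

end DualCoordinates

lemma coe_mem_range_aeval_basis {F : Type*} [Field F] {ι κ : Type*} [Fintype κ]
    {U : Submodule F (MvPolynomial ι F)} (b : Module.Basis κ F U) (u : U) :
    (u : MvPolynomial ι F) ∈ (aeval (R := F) fun j => (b j : MvPolynomial ι F)).range := by
  rw [← Algebra.adjoin_range_eq_range_aeval, ← b.sum_repr u, Submodule.coe_sum]
  exact Subalgebra.sum_mem _ fun j _ =>
    Subalgebra.smul_mem _ (Algebra.subset_adjoin (R := F) (Set.mem_range_self j)) _

section Evaluation

variable {F : Type*} [Field F] {K : Type*} [Group K] {ι κ : Type*} [Fintype κ] [DecidableEq κ]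

lemma aeval_polyAct (π : Representation F K (κ → F)) (k : K) {w : κ → MvPolynomial ι F}
    {φ : MvPolynomial ι F →ₐ[F] MvPolynomial ι F}
    (hφ : ∀ j, φ (w j) = ∑ x, π k (Pi.single x 1) j • w x) (q : MvPolynomial κ F) :
    aeval w (polyAct π k q) = φ (aeval w q) := by
  rw [← AlgHom.comp_apply, ← AlgHom.comp_apply]
  congr 1
  refine algHom_ext fun j => ?_
  simp [polyAct_X, hφ]

lemma aeval_polyAct_dualCoordRep {U : Submodule F (MvPolynomial ι F)} (σ : Representation F K U)
    (b : Module.Basis κ F U) (k : K) {φ : MvPolynomial ι F →ₐ[F] MvPolynomial ι F}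
    (hφ : ∀ u : U, φ u = σ k⁻¹ u) (q : MvPolynomial κ F) :
    aeval (fun j => (b j : MvPolynomial ι F)) (polyAct (dualCoordRep σ b) k q) =
      φ (aeval (fun j => (b j : MvPolynomial ι F)) q) := by
  refine aeval_polyAct _ k (fun j => ?_) q
  simp only [dualCoordRep_single_apply, hφ]
  conv_lhs => rw [← b.sum_repr (σ k⁻¹ (b j))]
  simp only [Submodule.coe_sum, Submodule.coe_smul]

end Evaluation

section Subquotient

variable {F : Type*} [Field F] {Γ K : Type*} [Group Γ] [Finite Γ] [Group K] {ι : Type*}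
  [Fintype ι] [DecidableEq ι]

lemma exists_moduleFiniteOver_quotient (τ : Representation F Γ (ι → F)) (N : Subgroup Γ) [N.Normal]
    (e : K ≃* Γ ⧸ N) : ∃ (m : ℕ) (π : Representation F K (Fin m → F)),
      ModuleFiniteOver (adjoinDegLE (invRing τ) (Nat.card N * sigmaAlg (invRing π))) ⊤ := by
  have : Finite K := Finite.of_equiv _ e.symm.toEquiv
  set R := invRing (τ.comp N.subtype)
  set c := Nat.card N
  set U := Subalgebra.toSubmodule R ⊓ restrictTotalDegree ι F c
  have hUstab : ∀ g, ∀ u ∈ U, polyAct τ g u ∈ U := fun g u hu =>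
    ⟨polyAct_mem_invRing_of_normal τ N hu.1 g,
      (mem_restrictTotalDegree ι c _).2 ((totalDegree_polyAct_le τ g u).trans
        ((mem_restrictTotalDegree ι c u).1 hu.2))⟩
  set σ := restrictRep τ U hUstab
  have : Representation.IsTrivial (σ.comp N.subtype) := ⟨fun ν => LinearMap.ext fun u =>
    Subtype.ext <| (mem_invRing_iff _).1 u.2.1 ν⁻¹⟩
  set σK := (σ.ofQuotient N).comp e.toMonoidHom
  set b := Module.finBasis F U
  set w : Fin (Module.finrank F U) → MvPolynomial ι F := fun j => b j
  set π := dualCoordRep σK b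
  set s := sigmaAlg (invRing π)
  refine ⟨_, π, ?_⟩
  have hequiv (g : Γ) (q) : aeval w (polyAct π (e.symm g) q) = polyAct τ g (aeval w q) :=
    aeval_polyAct_dualCoordRep σK b _ (fun u => by
      simp [σK, σ, ← QuotientGroup.mk_inv, Representation.ofQuotient_coe_apply,
        restrictRep_apply]) q
  have hinv {q} (hq : q ∈ invRing π) : aeval w q ∈ invRing τ :=
    (mem_invRing_iff τ).2 fun g => by rw [← hequiv, (mem_invRing_iff π).1 hq]
  have hmap := map_aeval_adjoinDegLE_le τ (S := invRing π) (c := c)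
    (fun j => (mem_restrictTotalDegree ι c _).1 (b j).2.2) (fun _ => hinv) s
  have hrange : adjoinDegLE R c ≤ (aeval w).range :=
    Algebra.adjoin_le <| Set.iUnion₂_subset fun i hi p hp =>
      coe_mem_range_aeval_basis b ⟨p, (mem_subComp.1 hp).1,
        (mem_restrictTotalDegree ι c p).2 ((mem_subComp.1 hp).2.totalDegree_le.trans hi)⟩
  have hN := (moduleFiniteOver_adjoinDegLE_card_top (τ.comp N.subtype)).mono_left hrange
  have hπ := (moduleFiniteOver_adjoinDegLE_sigmaAlg_top π).map (aeval w)
  rw [Algebra.map_top] at hπ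
  exact (hπ.trans hN).mono_left hmap

end Subquotient

lemma exists_sigmaAlg_invRing_le {F : Type*} [Field F] {G K : Type*} [Group G] [Finite G]
    [Group K] {n : ℕ} (ρ : Representation F G (Fin n → F)) (H : Subgroup G) (N : Subgroup H)
    [N.Normal] (e : K ≃* H ⧸ N) : ∃ (m : ℕ) (π : Representation F K (Fin m → F)),
      sigmaAlg (invRing ρ) ≤ H.index * Nat.card N * sigmaAlg (invRing π) := by
  obtain ⟨m, π, hπ⟩ := exists_moduleFiniteOver_quotient (ρ.comp H.subtype) N e
  have hH := moduleFiniteOver_adjoinDegLE_subgroup ρ H (Nat.card N * sigmaAlg (invRing π))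
  rw [← mul_assoc] at hH
  exact ⟨m, π, sigmaAlg_le (fgOver_of_moduleFiniteOver ((hH.trans hπ).mono_right le_top))⟩

lemma sigmaGrp_le_mul_sigmaGrp {F : Type*} [Field F] {G K : Type*} [Group G] [Group K] (C : ℕ)
    (h : ∀ (n : ℕ) (ρ : Representation F G (Fin n → F)), ∃ (m : ℕ)
      (π : Representation F K (Fin m → F)), sigmaAlg (invRing ρ) ≤ C * sigmaAlg (invRing π)) :
    sigmaGrp F G ≤ C * sigmaGrp F K := by
  refine iSup₂_le fun n ρ => ?_
  obtain ⟨m, π, hρπ⟩ := h n ρ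
  calc (sigmaAlg (invRing ρ) : ℕ∞) ≤ C * sigmaAlg (invRing π) := by exact_mod_cast hρπ
    _ ≤ C * sigmaGrp F K := mul_le_mul' le_rfl
        (le_iSup₂ (f := fun m (π : Representation F K (Fin m → F)) => (sigmaAlg (invRing π) : ℕ∞))
          m π)

theorem sigmaGrp_subquotient_general {F : Type*} [Field F] {G K : Type*} [Group G] [Finite G]
    [Group K] (H : Subgroup G) (N : Subgroup H) [N.Normal]
    (e : K ≃* H ⧸ N) :
    (Nat.card K : ℕ∞) * sigmaGrp F G ≤ (Nat.card G : ℕ∞) * sigmaGrp F K := by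
  have hcard : Nat.card G = Nat.card K * (H.index * Nat.card N) := by
    rw [← H.index_mul_card, Subgroup.card_eq_card_quotient_mul_card_subgroup N,
      Nat.card_congr e.toEquiv]
    ring
  calc (Nat.card K : ℕ∞) * sigmaGrp F G
      ≤ Nat.card K * ((H.index * Nat.card N : ℕ) * sigmaGrp F K) :=
        mul_le_mul' le_rfl
          (sigmaGrp_le_mul_sigmaGrp _ fun _ ρ => exists_sigmaAlg_invRing_le ρ H N e)
    _ = Nat.card G * sigmaGrp F K := by rw [hcard]; push_cast; ring

/-- For a subquotient `K` of the finite group `G`, `σ(G)/|G| ≤ σ(K)/|K|`, i.e.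
`|K| ⬝ σ(G) ≤ |G| ⬝ σ(K)`. -/
theorem sigmaGrp_subquotient {F : Type*} [Field F] {G K : Type*} [Group G] [Finite G]
    [Group K] (hG : (Nat.card G : F) ≠ 0) (H : Subgroup G) (N : Subgroup H) [N.Normal]
    (e : K ≃* H ⧸ N) :
    (Nat.card K : ℕ∞) * sigmaGrp F G ≤ (Nat.card G : ℕ∞) * sigmaGrp F K :=
  sigmaGrp_subquotient_general H N e
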